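/- arXiv:2202.01688 — 3 statements merged into one kernel-verified Lean document; each statement's English description precedes it below -/
import Mathlib

section
/- Let p be a prime and let G be a group of exponent p, i.e. g^p = 1 for every g ∈ G. Let a, b ∈ G with a ≠ 1 and b ∉ ⟨a⟩. Then the 2p group elements (ab)^i and (ab)^i·a, for 0 ≤ i < p, are pairwise distinct; equivalently, the set {(ab)^i : 0 ≤ i < p} ∪ {(ab)^i·a : 0 ≤ i < p} has exactly 2p elements. (These are the vertices of the cycle in the Cayley graph determined by the relation (ab)^p = 1.) -/
/-- In a group of prime exponent `p`, if `a ≠ 1` and `b ∉ ⟨a⟩`, then the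
`2p` elements `(ab)^i` and `(ab)^i·a`, `0 ≤ i < p`, are pairwise distinct: the set they
form has exactly `2p` elements. -/
theorem stmt_7 {G : Type*} [Group G] [DecidableEq G] (p : ℕ) (hp : p.Prime)
    (hexp : ∀ g : G, g ^ p = 1) (a b : G)
    (ha : a ≠ 1) (hb : b ∉ Subgroup.zpowers a) :
    ((Finset.range p).image (fun i => (a * b) ^ i) ∪
      (Finset.range p).image (fun i => (a * b) ^ i * a)).card = 2 * p := by
  haveI : Fact p.Prime := ⟨hp⟩
  set c := a * b with hc
  have hc1 : c ≠ 1 := by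
    intro h
    apply hb
    have : b = a⁻¹ := by
      rw [hc] at h
      exact ((mul_eq_one_iff_inv_eq.mp h).symm)
    rw [this]
    exact Subgroup.inv_mem _ (Subgroup.mem_zpowers a)
  have hordc : orderOf c = p := orderOf_eq_prime (hexp c) hc1
  have horda : orderOf a = p := orderOf_eq_prime (hexp a) ha
  have hinj : Set.InjOn (fun i => c ^ i) (Set.Iio (orderOf c)) := pow_injOn_Iio_orderOf
  have hinj' : Set.InjOn (fun i : ℕ => c ^ i) ((Finset.range p : Finset ℕ) : Set ℕ) := by
    intro x hx y hy h
    exact hinj (by simpa [hordc] using hx) (by simpa [hordc] using hy) h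
  have hinj2 : Set.InjOn (fun i : ℕ => c ^ i * a) ((Finset.range p : Finset ℕ) : Set ℕ) := by
    intro x hx y hy h
    exact hinj' hx hy (mul_right_cancel h)
  have hdisj : Disjoint ((Finset.range p).image (fun i => c ^ i))
      ((Finset.range p).image (fun i => c ^ i * a)) := by
    rw [Finset.disjoint_left]
    rintro x hx hx'
    simp only [Finset.mem_image, Finset.mem_range] at hx hx'
    obtain ⟨i, hi, rfl⟩ := hx
    obtain ⟨j, hj, hji⟩ := hx'
    have hA : a ∈ Subgroup.zpowers c := by
      have : a = (c ^ j)⁻¹ * c ^ i := by rw [← hji]; group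
      rw [this]
      exact Subgroup.mul_mem _ (Subgroup.inv_mem _ (Subgroup.pow_mem _ (Subgroup.mem_zpowers c) j))
        (Subgroup.pow_mem _ (Subgroup.mem_zpowers c) i)
    have hle : Subgroup.zpowers a ≤ Subgroup.zpowers c := by
      rwa [Subgroup.zpowers_le]
    have hcard : Nat.card (Subgroup.zpowers a) = Nat.card (Subgroup.zpowers c) := by
      rw [Nat.card_zpowers, Nat.card_zpowers, horda, hordc]
    have heq : Subgroup.zpowers a = Subgroup.zpowers c := by
      haveI : Finite (Subgroup.zpowers c) := by
        have : IsOfFinOrder c := by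
          rw [← orderOf_pos_iff, hordc]; exact hp.pos
        exact Set.Finite.to_subtype this.finite_zpowers
      exact Subgroup.eq_of_le_of_card_ge hle (le_of_eq hcard.symm)
    apply hb
    have hcmem : c ∈ Subgroup.zpowers a := heq ▸ Subgroup.mem_zpowers c
    have : b = a⁻¹ * c := by rw [hc]; group
    rw [this]
    exact Subgroup.mul_mem _ (Subgroup.inv_mem _ (Subgroup.mem_zpowers a)) hcmem
  rw [Finset.card_union_of_disjoint hdisj, Finset.card_image_of_injOn hinj',
    Finset.card_image_of_injOn hinj2, Finset.card_range, two_mul]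
end

section
/- Let p be a prime and let G be a group of exponent p, i.e. g^p = 1 for every g ∈ G. Let a, b, c ∈ G be pairwise distinct with c not in the subgroup generated by {a, b}. Encode a directed labelled edge of the Cayley graph as a pair (g, s) ∈ G × G (initial vertex g, label s). Let E₁ = {((ab)^i, a) : 0 ≤ i < p} ∪ {((ab)^i·a, b) : 0 ≤ i < p} be the edge set of the cycle of the relation (ab)^p and E₂ = {((ac)^j, a) : 0 ≤ j < p} ∪ {((ac)^j·a, c) : 0 ≤ j < p} the edge set of the cycle of the relation (ac)^p. Then E₁ ∩ E₂ = {(1, a)}, i.e. the two cycles share exactly the single edge from 1 to a. -/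
/-- Auxiliary: if `x^j` lies in a subgroup, `x^p = 1`, `0 < j < p` with `p` prime,
then `x` lies in the subgroup. -/
lemma aux_pow_mem {G : Type*} [Group G] {H : Subgroup G} {x : G} {p j : ℕ}
    (hp : p.Prime) (hx : x ^ p = 1) (hj0 : j ≠ 0) (hj : j < p)
    (hmem : x ^ j ∈ H) : x ∈ H := by
  have hco : Nat.gcd j p = 1 := by
    have : ¬ p ∣ j := Nat.not_dvd_of_pos_of_lt (Nat.pos_of_ne_zero hj0) hj
    exact Nat.Coprime.gcd_eq_one ((hp.coprime_iff_not_dvd.mpr this).symm)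
  have hbez := Nat.gcd_eq_gcd_ab j p
  rw [hco] at hbez
  have hx1 : x = (x ^ (j : ℤ)) ^ Nat.gcdA j p * (x ^ (p : ℤ)) ^ Nat.gcdB j p := by
    rw [← zpow_mul, ← zpow_mul, ← zpow_add, ← hbez]
    simp
  rw [hx1]
  have h1 : x ^ (j : ℤ) ∈ H := by rwa [zpow_natCast]
  have h2 : x ^ (p : ℤ) ∈ H := by
    rw [zpow_natCast, hx]; exact H.one_mem
  exact H.mul_mem (H.zpow_mem h1 _) (H.zpow_mem h2 _)

/-- In a group of prime exponent `p`, for pairwise distinct `a, b, c` with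
`c` not in the subgroup generated by `{a, b}`, the edge sets (encoded as pairs
(initial vertex, label) in `G × G`) of the Cayley-graph cycles of the relations `(ab)^p`
and `(ac)^p` intersect exactly in the single edge `(1, a)`. -/
theorem stmt_8 {G : Type*} [Group G] (p : ℕ) (hp : p.Prime)
    (hexp : ∀ g : G, g ^ p = 1) (a b c : G)
    (hab : a ≠ b) (hac : a ≠ c) (hbc : b ≠ c)
    (hc : c ∉ Subgroup.closure ({a, b} : Set G)) :
    (({ e : G × G | ∃ i < p, e = ((a * b) ^ i, a) } ∪
        { e : G × G | ∃ i < p, e = ((a * b) ^ i * a, b) }) ∩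
      ({ e : G × G | ∃ j < p, e = ((a * c) ^ j, a) } ∪
        { e : G × G | ∃ j < p, e = ((a * c) ^ j * a, c) })) = {((1 : G), a)} := by
  set H := Subgroup.closure ({a, b} : Set G) with hH
  have haH : a ∈ H := Subgroup.subset_closure (by simp)
  have hbH : b ∈ H := Subgroup.subset_closure (by simp)
  ext e
  simp only [Set.mem_inter_iff, Set.mem_union, Set.mem_setOf_eq, Set.mem_singleton_iff]
  constructor
  · rintro ⟨h1, h2⟩
    rcases h1 with ⟨i, hi, rfl⟩ | ⟨i, hi, rfl⟩ <;>
      rcases h2 with ⟨j, hj, he⟩ | ⟨j, hj, he⟩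
    · -- labels a = a; vertices (ab)^i = (ac)^j
      have hv : (a * b) ^ i = (a * c) ^ j := congrArg Prod.fst he
      have hj0 : j = 0 := by
        by_contra hj0
        have hmem : (a * c) ^ j ∈ H := by
          rw [← hv]; exact H.pow_mem (H.mul_mem haH hbH) i
        have hacH : a * c ∈ H := aux_pow_mem hp (hexp _) hj0 hj hmem
        exact hc (by simpa using H.mul_mem (H.inv_mem haH) hacH)
      subst hj0
      simp only [pow_zero] at hv
      rw [hv]
    · exact absurd (congrArg Prod.snd he) hac
    · exact absurd (congrArg Prod.snd he) (by simpa using hab.symm)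
    · exact absurd (congrArg Prod.snd he) hbc
  · rintro rfl
    exact ⟨Or.inl ⟨0, hp.pos, by simp⟩, Or.inl ⟨0, hp.pos, by simp⟩⟩
end

section
/- Let p be a prime and let G be a group of exponent p, i.e. g^p = 1 for every g ∈ G. Let S ⊆ G be a finite minimal generating set, i.e. for every c ∈ S, c is not in the subgroup generated by S \ {c}; write N = |S| and let a ∈ S. Define the finitely supported function z_a : G × G → ℂ by z_a = Σ_{b ∈ S, b ≠ a} Σ_{0 ≤ i < p} ( δ_{((ab)^i, a)} + δ_{((ab)^i·a, b)} ), where δ_e denotes the indicator function of the pair e ∈ G × G. Then z_a(1, a) = N − 1 and Σ_{e ∈ G × G} |z_a(e)|² = (N−1)² + (N−1)(2p−1). -/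
/-!
The `2p(N-1)` edges summed in `z_a` are pairwise distinct, except that the `N-1` edges
`((ab)^0, a) = (1, a)` coincide; so `z_a(1, a) = N-1`, every other value is `0` or `1`, and
`Σ_e |z_a(e)|² = (N-1)² + (2p(N-1) - (N-1))`. Distinctness comes from minimality of `S`: `ab ≠ 1`,
so `ab` has order `p`; and if a nontrivial power of `ab'` were a power of `ab` with `b ≠ b'`,
then `ab'` would be a power of `ab`, putting `b'` in the subgroup generated by `S \ {b'}`.
-/

open Finset

section FiberCount

variable {ι β : Type*} [DecidableEq β]

theorem finset_sum_single_one_apply {R : Type*} [AddCommMonoidWithOne R] (T : Finset ι)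
    (φ : ι → β) (e : β) :
    (∑ x ∈ T, Finsupp.single (φ x) (1 : R)) e = #{x ∈ T | φ x = e} := by
  simp [Finsupp.finsetSum_apply, Finsupp.single_apply]

theorem sum_card_fiber_sq_of_injOn_ne (T : Finset ι) (φ : ι → β) (e₀ : β)
    (hinj : ∀ x ∈ T, ∀ y ∈ T, φ x = φ y → φ x ≠ e₀ → x = y) :
    ∑ e ∈ T.image φ, #{x ∈ T | φ x = e} ^ 2 = #{x ∈ T | φ x = e₀} ^ 2 + #{x ∈ T | φ x ≠ e₀} := by
  have hfiber : ∀ x ∈ T, #{y ∈ T | φ y = φ x} = if φ x = e₀ then #{y ∈ T | φ y = e₀} else 1 := by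
    intro x hx
    split_ifs with h
    · rw [h]
    · refine card_eq_one.2 ⟨x, ext fun y => ?_⟩
      simp only [mem_filter, mem_singleton]
      exact ⟨fun ⟨hy, hyx⟩ => hinj y hy x hx hyx (hyx ▸ h), by rintro rfl; exact ⟨hx, rfl⟩⟩
  calc ∑ e ∈ T.image φ, #{x ∈ T | φ x = e} ^ 2
      = ∑ e ∈ T.image φ, ∑ _ ∈ T with φ _ = e, #{x ∈ T | φ x = e} := by
        simp only [sum_const, smul_eq_mul, sq]
    _ = ∑ x ∈ T, #{y ∈ T | φ y = φ x} :=
        sum_fiberwise_of_maps_to' (fun x hx => mem_image_of_mem φ hx) _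
    _ = _ := by
        rw [sum_congr rfl hfiber, sum_ite, sum_const, sum_const, smul_eq_mul, smul_eq_mul, sq,
          mul_one]

theorem sum_norm_sq_finset_sum_single_one (T : Finset ι) (φ : ι → β) (e₀ : β)
    (hinj : ∀ x ∈ T, ∀ y ∈ T, φ x = φ y → φ x ≠ e₀ → x = y) :
    ((∑ x ∈ T, Finsupp.single (φ x) (1 : ℂ)).sum fun _ v => ‖v‖ ^ 2) =
      (#{x ∈ T | φ x = e₀} : ℝ) ^ 2 + #{x ∈ T | φ x ≠ e₀} := by
  have hsupp : (∑ x ∈ T, Finsupp.single (φ x) (1 : ℂ)).support ⊆ T.image φ := by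
    intro e he
    rw [Finsupp.mem_support_iff, finset_sum_single_one_apply, Nat.cast_ne_zero, ← pos_iff_ne_zero,
      card_pos] at he
    obtain ⟨x, hx⟩ := he
    rw [mem_filter] at hx
    exact hx.2 ▸ mem_image_of_mem φ hx.1
  rw [Finsupp.sum_of_support_subset _ hsupp _ (fun _ _ => by simp)]
  simp only [finset_sum_single_one_apply, Complex.norm_natCast]
  exact_mod_cast sum_card_fiber_sq_of_injOn_ne T φ e₀ hinj

end FiberCount

theorem exists_pow_pow_eq_self_of_pow_prime_eq_one {G : Type*} [Monoid G] {x : G} {p j : ℕ}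
    (hp : p.Prime) (hx : x ^ p = 1) (hj : x ^ j ≠ 1) : ∃ m : ℕ, (x ^ j) ^ m = x := by
  have hjp : j.Coprime p :=
    Nat.coprime_comm.1 <| hp.coprime_iff_not_dvd.2 fun hdvd =>
      hj <| orderOf_dvd_iff_pow_eq_one.1 ((orderOf_dvd_of_pow_eq_one hx).trans hdvd)
  exact exists_pow_eq_self_of_coprime (hjp.coprime_dvd_right (orderOf_dvd_of_pow_eq_one hx))

section MinimalGeneratingSet

variable {G : Type*} [Group G] [DecidableEq G] {S : Finset G}

theorem mul_ne_one_of_minimal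
    (hmin : ∀ c ∈ S, c ∉ Subgroup.closure ((S.erase c : Finset G) : Set G))
    {a b : G} (ha : a ∈ S) (hb : b ∈ S) (hba : b ≠ a) : a * b ≠ 1 := by
  intro h
  have hinv : a⁻¹ ∈ Subgroup.closure ((S.erase b : Finset G) : Set G) :=
    inv_mem (Subgroup.subset_closure (mem_erase.2 ⟨hba.symm, ha⟩))
  exact hmin b hb (eq_inv_of_mul_eq_one_right h ▸ hinv)

theorem eq_of_pow_mul_eq_pow_mul_of_minimal
    (hmin : ∀ c ∈ S, c ∉ Subgroup.closure ((S.erase c : Finset G) : Set G))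
    {p : ℕ} (hp : p.Prime) {a b b' : G} {i j : ℕ}
    (ha : a ∈ S) (hb : b ∈ S) (hb' : b' ∈ S) (hb'a : b' ≠ a) (hexp : (a * b') ^ p = 1)
    (h : (a * b) ^ i = (a * b') ^ j) (hj : (a * b') ^ j ≠ 1) : b = b' := by
  by_contra hne
  obtain ⟨m, hm⟩ := exists_pow_pow_eq_self_of_pow_prime_eq_one hp hexp hj
  have haM : a ∈ Subgroup.closure ((S.erase b' : Finset G) : Set G) :=
    Subgroup.subset_closure (mem_erase.2 ⟨hb'a.symm, ha⟩)
  have hbM : b ∈ Subgroup.closure ((S.erase b' : Finset G) : Set G) :=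
    Subgroup.subset_closure (mem_erase.2 ⟨hne, hb⟩)
  have hab'M : a * b' ∈ Subgroup.closure ((S.erase b' : Finset G) : Set G) := by
    rw [← hm, ← h]
    exact pow_mem (pow_mem (mul_mem haM hbM) i) m
  apply hmin b' hb'
  simpa using mul_mem (inv_mem haM) hab'M

theorem pow_mul_injOn_of_minimal
    (hmin : ∀ c ∈ S, c ∉ Subgroup.closure ((S.erase c : Finset G) : Set G))
    {p : ℕ} (hp : p.Prime) {a b : G} (ha : a ∈ S) (hb : b ∈ S) (hba : b ≠ a)
    (hexp : (a * b) ^ p = 1) {i j : ℕ} (hi : i < p) (hj : j < p) (h : (a * b) ^ i = (a * b) ^ j) :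
    i = j := by
  have := Fact.mk hp
  have hord : orderOf (a * b) = p := orderOf_eq_prime hexp (mul_ne_one_of_minimal hmin ha hb hba)
  exact pow_injOn_Iio_orderOf (show i < orderOf (a * b) by rwa [hord])
    (show j < orderOf (a * b) by rwa [hord]) h

/-- The summands of `z_a`, indexed by `(b, i, tag)`. -/
def relationEdge (a : G) : G × ℕ × Bool → G × G
  | (b, i, true) => ((a * b) ^ i, a)
  | (b, i, false) => ((a * b) ^ i * a, b)

theorem filter_relationEdge_eq_mk_one
    (hmin : ∀ c ∈ S, c ∉ Subgroup.closure ((S.erase c : Finset G) : Set G))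
    {p : ℕ} (hp : p.Prime) (hexp : ∀ g : G, g ^ p = 1) {a : G} (ha : a ∈ S) :
    {x ∈ S.erase a ×ˢ range p ×ˢ (univ : Finset Bool) | relationEdge a x = (1, a)} =
      S.erase a ×ˢ {0} ×ˢ {true} := by
  ext ⟨b, i, t⟩
  rw [mem_filter]
  cases t
  · simp +contextual [relationEdge]
  · simp only [relationEdge, mem_product, mem_range, mem_singleton, Prod.mk.injEq, and_true]
    constructor
    · rintro ⟨⟨hb, hi, -⟩, h1⟩
      obtain ⟨hba, hbS⟩ := mem_erase.1 hb
      exact ⟨hb, pow_mul_injOn_of_minimal hmin hp ha hbS hba (hexp _) hi hp.pos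
        (h1.trans (pow_zero _).symm)⟩
    · rintro ⟨hb, rfl⟩
      exact ⟨⟨hb, hp.pos, mem_univ _⟩, pow_zero _⟩

theorem relationEdge_injOn_of_ne_mk_one
    (hmin : ∀ c ∈ S, c ∉ Subgroup.closure ((S.erase c : Finset G) : Set G))
    {p : ℕ} (hp : p.Prime) (hexp : ∀ g : G, g ^ p = 1) {a : G} (ha : a ∈ S) :
    ∀ x ∈ S.erase a ×ˢ range p ×ˢ (univ : Finset Bool),
      ∀ y ∈ S.erase a ×ˢ range p ×ˢ (univ : Finset Bool),
        relationEdge a x = relationEdge a y → relationEdge a x ≠ (1, a) → x = y := by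
  rintro ⟨b, i, s⟩ hx ⟨b', j, t⟩ hy h hne
  simp only [mem_product, mem_range, mem_erase] at hx hy
  obtain ⟨⟨hba, hb⟩, hi, -⟩ := hx
  obtain ⟨⟨hb'a, hb'⟩, hj, -⟩ := hy
  cases s <;> cases t <;> simp only [relationEdge, Prod.mk.injEq, and_true] at h
  · obtain ⟨hpow, rfl⟩ := h
    rw [pow_mul_injOn_of_minimal hmin hp ha hb hba (hexp _) hi hj (mul_right_cancel hpow)]
  · exact absurd h.2 hba
  · exact absurd h.2.symm hb'a
  · have hne' : (a * b') ^ j ≠ 1 := fun h1 => hne (by rw [relationEdge, h, h1])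
    obtain rfl := eq_of_pow_mul_eq_pow_mul_of_minimal hmin hp ha hb hb' hb'a (hexp _) h hne'
    rw [pow_mul_injOn_of_minimal hmin hp ha hb hba (hexp _) hi hj h]

end MinimalGeneratingSet

theorem stmt_9_general {G : Type*} [Group G] [DecidableEq G] (p : ℕ) (hp : p.Prime)
    (hexp : ∀ g : G, g ^ p = 1)
    (S : Finset G)
    (hmin : ∀ c ∈ S, c ∉ Subgroup.closure ((S.erase c : Finset G) : Set G))
    (a : G) (ha : a ∈ S)
    (z : (G × G) →₀ ℂ)
    (hz : z = ∑ b ∈ S.erase a, ∑ i ∈ Finset.range p,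
      (Finsupp.single ((a * b) ^ i, a) 1 + Finsupp.single ((a * b) ^ i * a, b) 1)) :
    z ((1 : G), a) = (S.card : ℂ) - 1 ∧
      (z.sum fun _ v => ‖v‖ ^ 2) =
        ((S.card : ℝ) - 1) ^ 2 + ((S.card : ℝ) - 1) * (2 * p - 1) := by
  set T := S.erase a ×ˢ range p ×ˢ (univ : Finset Bool) with hT
  have hzT : z = ∑ x ∈ T, Finsupp.single (relationEdge a x) 1 := by
    simp only [hz, T, sum_product, Fintype.sum_bool, relationEdge]
  have hS : 1 ≤ #S := card_pos.2 ⟨a, ha⟩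
  have hfiber : #{x ∈ T | relationEdge a x = (1, a)} = #S - 1 := by
    rw [hT, filter_relationEdge_eq_mk_one hmin hp hexp ha, card_product, card_product,
      card_singleton, card_singleton, card_erase_of_mem ha, mul_one, mul_one]
  have hcard : #T = (#S - 1) * (2 * p) := by
    rw [hT, card_product, card_product, card_range, card_univ, Fintype.card_bool,
      card_erase_of_mem ha, mul_comm p]
  have hsplit := card_filter_add_card_filter_not (s := T) (fun x => relationEdge a x = (1, a))
  rw [hfiber, hcard] at hsplit
  refine ⟨?_, ?_⟩
  · rw [hzT, finset_sum_single_one_apply, hfiber, Nat.cast_sub hS, Nat.cast_one]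
  · rw [hzT, sum_norm_sq_finset_sum_single_one T _ (1, a)
      (relationEdge_injOn_of_ne_mk_one hmin hp hexp ha), hfiber]
    have hsplitR := congrArg (Nat.cast (R := ℝ)) hsplit
    push_cast [Nat.cast_sub hS] at hsplitR ⊢
    linear_combination hsplitR

/-- Let `G` be a group of prime exponent `p` with a finite minimal
generating set `S`, `N = |S|`, and `a ∈ S`. The cycle `z_a`, the sum over `b ∈ S \ {a}` of
the cycles of the relations `(ab)^p` (edges encoded as pairs in `G × G`), satisfies
`z_a(1, a) = N − 1` and `Σ_e |z_a(e)|² = (N−1)² + (N−1)(2p−1)`. -/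
theorem stmt_9 {G : Type*} [Group G] [DecidableEq G] (p : ℕ) (hp : p.Prime)
    (hexp : ∀ g : G, g ^ p = 1)
    (S : Finset G) (hgen : Subgroup.closure (S : Set G) = ⊤)
    (hmin : ∀ c ∈ S, c ∉ Subgroup.closure ((S.erase c : Finset G) : Set G))
    (a : G) (ha : a ∈ S)
    (z : (G × G) →₀ ℂ)
    (hz : z = ∑ b ∈ S.erase a, ∑ i ∈ Finset.range p,
      (Finsupp.single ((a * b) ^ i, a) 1 + Finsupp.single ((a * b) ^ i * a, b) 1)) :
    z ((1 : G), a) = (S.card : ℂ) - 1 ∧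
      (z.sum fun _ v => ‖v‖ ^ 2) =
        ((S.card : ℝ) - 1) ^ 2 + ((S.card : ℝ) - 1) * (2 * p - 1) :=
  stmt_9_general p hp hexp S hmin a ha z hz
end
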